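/- arXiv:1911.11666 — 5 statements merged into one kernel-verified Lean document; each statement's English description precedes it below -/
import Mathlib

section
/- There is no constant C>0 such that for all h ∈ (0,1], the inequality √(1/(24h)+h/24) ≤ C(√(h/15)+√((2/3)h)) holds. Consequently, the stability estimate ‖I^{BDM}v‖ ≲ ‖v‖ + Σ_{i,j}‖∂v_i/∂x_j‖ fails on the family of triangles T*(h) as h→0. -/
/-! Multiplying both sides by `√h` turns the left side into `√((1 + h²)/24) ≥ √(1/24)`, while the
right side becomes at most `2 C h`; so the inequality fails once `h < 1 / (10 C)`. -/

lemma sqrt_le_sqrt_mul_sqrt_div_add {a b h : ℝ} (hb : 0 ≤ b) (hh : 0 < h) :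
    √a ≤ √h * √(a / h + b * h) := by
  rw [← Real.sqrt_mul hh.le]
  refine Real.sqrt_le_sqrt ?_
  have h_expand : h * (a / h + b * h) = a + b * h ^ 2 := by field_simp
  rw [h_expand]
  exact le_add_of_nonneg_right (by positivity)

lemma sqrt_add_sqrt_le_two_mul_sqrt {a b x : ℝ} (ha : a ≤ x) (hb : b ≤ x) :
    √a + √b ≤ 2 * √x := by
  linarith [Real.sqrt_le_sqrt ha, Real.sqrt_le_sqrt hb]

/-- There is no constant `C > 0` such that for all `h ∈ (0,1]`,
`√(1/(24h) + h/24) ≤ C (√(h/15) + √((2/3)h))`.  Hence the stability estimate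
`‖I^BDM v‖ ≲ ‖v‖ + Σ ‖∂v_i/∂x_j‖` fails on the family of triangles `T*(h)` as `h → 0`. -/
theorem no_uniform_stability_constant :
    ¬ ∃ C : ℝ, 0 < C ∧ ∀ h : ℝ, 0 < h → h ≤ 1 →
      Real.sqrt (1 / (24 * h) + h / 24) ≤
        C * (Real.sqrt (h / 15) + Real.sqrt (2 / 3 * h)) := by
  rintro ⟨C, hC, hbound⟩
  set h : ℝ := min 1 (1 / (20 * C))
  have h_pos : 0 < h := lt_min one_pos (by positivity)
  have h_small : 2 * C * h ≤ 1 / 10 := by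
    calc 2 * C * h ≤ 2 * C * (1 / (20 * C)) := by gcongr; exact min_le_right _ _
      _ = 1 / 10 := by field_simp; norm_num
  have lhs_ge : 1 / 5 ≤ √h * √(1 / (24 * h) + h / 24) := by
    have h_fifth : 1 / 5 ≤ √(1 / 24 : ℝ) := Real.le_sqrt_of_sq_le (by norm_num)
    have h_split : 1 / (24 * h) + h / 24 = 1 / 24 / h + 1 / 24 * h := by field_simp
    rw [h_split]
    exact h_fifth.trans (sqrt_le_sqrt_mul_sqrt_div_add (by norm_num) h_pos)
  have rhs_le : √h * (C * (√(h / 15) + √(2 / 3 * h))) ≤ 2 * C * h := by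
    have h_sum := sqrt_add_sqrt_le_two_mul_sqrt (a := h / 15) (b := 2 / 3 * h) (x := h)
      (by linarith) (by linarith)
    calc √h * (C * (√(h / 15) + √(2 / 3 * h))) ≤ √h * (C * (2 * √h)) := by gcongr
      _ = 2 * C * h := by rw [show √h * (C * (2 * √h)) = 2 * C * (√h * √h) by ring,
          Real.mul_self_sqrt h_pos.le]
  have h_mul := mul_le_mul_of_nonneg_left (hbound h h_pos (min_le_left _ _)) (Real.sqrt_nonneg h)
  linarith
end

section
/- Let T̃ be the tetrahedron with vertices p1=(0,0,0), p2=(h1,0,0), p3=(0,0,h3), p4=(0,h2,h3), and let u(x) = (x1 x3, −x2 x3, 0). Then the vector field p(x) = h3·((2/5)x1, −(3/5)x2, −h3/10 + (1/5)x3) has components in P₁ and its normal trace moments against P₁ on each face of T̃ agree with those of u; i.e., p is the BDM₁ interpolant of u on T̃. -/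
open MeasureTheory intervalIntegral

/-- Dot product on `ℝ × ℝ × ℝ` (viewed as `ℝ³`). -/
def dot3 (a b : ℝ × ℝ × ℝ) : ℝ := a.1 * b.1 + a.2.1 * b.2.1 + a.2.2 * b.2.2

/-- Flux moment `∫_e (F·n) z dS` over the (triangular) face with vertices `a, b, c`,
where `N = ±(b-a)×(c-a)` is the area-weighted outward normal supplied by the caller;
with the parameterization `γ(s,t) = a + s(b-a) + t(c-a)` over `{s,t ≥ 0, s+t ≤ 1}`,
the surface element exactly cancels the normalization of the normal. -/
noncomputable def faceFluxMoment (F : ℝ × ℝ × ℝ → ℝ × ℝ × ℝ) (a b c N : ℝ × ℝ × ℝ)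
    (z : ℝ × ℝ × ℝ → ℝ) : ℝ :=
  ∫ s in (0:ℝ)..1, ∫ t in (0:ℝ)..(1 - s),
    dot3 (F (a + s • (b - a) + t • (c - a))) N * z (a + s • (b - a) + t • (c - a))

/-- The field `u(x) = (x₁x₃, -x₂x₃, 0)`. -/
def uField3 : ℝ × ℝ × ℝ → ℝ × ℝ × ℝ := fun p => (p.1 * p.2.2, -(p.2.1 * p.2.2), 0)

/-- The claimed BDM₁ interpolant `p(x) = h₃ ((2/5)x₁, -(3/5)x₂, -h₃/10 + (1/5)x₃)`. -/
noncomputable def pField3 (h3 : ℝ) : ℝ × ℝ × ℝ → ℝ × ℝ × ℝ :=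
  fun p => (h3 * (2 / 5 * p.1), h3 * (-(3 / 5) * p.2.1), h3 * (-h3 / 10 + 1 / 5 * p.2.2))

/-! On each face the flux integrand, pulled back to the reference triangle by
`(s, t) ↦ a + s (b - a) + t (c - a)`, is a polynomial of total degree at most 3 in `(s, t)`:
the normal component of `p` is affine, that of `u` quadratic, and the test function affine.
The four-point Strang–Fix cubature is exact in that degree (check it on monomials, whose
integrals are Beta integrals), so each moment of `p` and of `u` is a combination of four point
values, and these agree by polynomial arithmetic. -/

open scoped Nat

theorem integral_pow_mul_one_sub_pow (i k : ℕ) :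
    ∫ x in (0:ℝ)..1, x ^ i * (1 - x) ^ k = i ! * k ! / (i + k + 1)! := by
  induction k generalizing i with
  | zero => simp [integral_pow, Nat.factorial_succ]; field_simp
  | succ k ih =>
    have hsplit : ∀ x : ℝ, x ^ i * (1 - x) ^ (k + 1) =
        x ^ i * (1 - x) ^ k - x ^ (i + 1) * (1 - x) ^ k := fun x => by ring
    simp_rw [hsplit]
    rw [intervalIntegral.integral_sub (Continuous.intervalIntegrable (by fun_prop) _ _)
      (Continuous.intervalIntegrable (by fun_prop) _ _), ih, ih,
      show i + 1 + k + 1 = i + (k + 1) + 1 by ring, Nat.factorial_succ (i + (k + 1)),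
      show i + (k + 1) = i + k + 1 by ring]
    push_cast [Nat.factorial_succ]
    field_simp
    ring

theorem integral_pow_zero_one_sub (j : ℕ) (s : ℝ) :
    ∫ t in (0:ℝ)..(1 - s), t ^ j = (1 - s) ^ (j + 1) / (j + 1) := by
  simp [integral_pow]

noncomputable def triangleIntegral (f : ℝ → ℝ → ℝ) : ℝ :=
  ∫ s in (0:ℝ)..1, ∫ t in (0:ℝ)..(1 - s), f s t

theorem triangleIntegral_monomial (i j : ℕ) :
    triangleIntegral (fun s t => s ^ i * t ^ j) = i ! * j ! / (i + j + 2)! := by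
  simp only [triangleIntegral, intervalIntegral.integral_const_mul, integral_pow_zero_one_sub,
    ← mul_div_assoc, intervalIntegral.integral_div,
    integral_pow_mul_one_sub_pow, show i + (j + 1) + 1 = i + j + 2 by ring]
  push_cast [Nat.factorial_succ]
  field_simp

theorem triangleIntegral_sum_monomial {ι : Type*} (S : Finset ι) (c : ι → ℝ) (e : ι → ℕ × ℕ) :
    triangleIntegral (fun s t => ∑ m ∈ S, c m * (s ^ (e m).1 * t ^ (e m).2)) =
      ∑ m ∈ S, c m * triangleIntegral (fun s t => s ^ (e m).1 * t ^ (e m).2) := by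
  have inner : ∀ s : ℝ, ∫ t in (0:ℝ)..(1 - s), ∑ m ∈ S, c m * (s ^ (e m).1 * t ^ (e m).2) =
      ∑ m ∈ S, c m * (s ^ (e m).1 * ((1 - s) ^ ((e m).2 + 1) / ((e m).2 + 1))) := fun s => by
    rw [intervalIntegral.integral_finsetSum fun m _ =>
      Continuous.intervalIntegrable (by fun_prop) _ _]
    simp only [intervalIntegral.integral_const_mul, integral_pow_zero_one_sub]
  simp only [triangleIntegral, inner, intervalIntegral.integral_const_mul,
    integral_pow_zero_one_sub]
  rw [intervalIntegral.integral_finsetSum fun m _ =>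
    Continuous.intervalIntegrable (by fun_prop) _ _]
  simp only [intervalIntegral.integral_const_mul]

-- Strang–Fix four-point rule, exact up to total degree 3
noncomputable def triangleCubature (f : ℝ → ℝ → ℝ) : ℝ :=
  (25 * (f (1/5) (1/5) + f (3/5) (1/5) + f (1/5) (3/5)) - 27 * f (1/3) (1/3)) / 96

theorem triangleCubature_monomial {i j : ℕ} (h : i + j ≤ 3) :
    triangleCubature (fun s t => s ^ i * t ^ j) = i ! * j ! / (i + j + 2)! := by
  have hi : i ≤ 3 := by omega
  have hj : j ≤ 3 := by omega
  interval_cases i <;> interval_cases j <;>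
    first | omega | norm_num [triangleCubature, Nat.factorial]

theorem triangleCubature_sum {ι : Type*} (S : Finset ι) (c : ι → ℝ) (f : ι → ℝ → ℝ → ℝ) :
    triangleCubature (fun s t => ∑ m ∈ S, c m * f m s t) =
      ∑ m ∈ S, c m * triangleCubature (f m) := by
  simp only [triangleCubature, Finset.mul_sum, Finset.sum_div, ← Finset.sum_add_distrib,
    ← Finset.sum_sub_distrib]
  refine Finset.sum_congr rfl fun m _ => by ring

open MvPolynomial in
def IsPolyLE (n : ℕ) (f : ℝ → ℝ → ℝ) : Prop :=
  ∃ P : MvPolynomial (Fin 2) ℝ, P.totalDegree ≤ n ∧ ∀ s t, f s t = eval ![s, t] P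

theorem eval_fin_two_eq_sum (P : MvPolynomial (Fin 2) ℝ) (s t : ℝ) :
    MvPolynomial.eval ![s, t] P = ∑ m ∈ P.support, P.coeff m * (s ^ m 0 * t ^ m 1) := by
  simp [MvPolynomial.eval_eq', Fin.prod_univ_two]

theorem triangleIntegral_eq_triangleCubature {f : ℝ → ℝ → ℝ} (hf : IsPolyLE 3 f) :
    triangleIntegral f = triangleCubature f := by
  obtain ⟨P, hdeg, hP⟩ := hf
  have hf : f = fun s t => ∑ m ∈ P.support, P.coeff m * (s ^ m 0 * t ^ m 1) := by
    funext s t; rw [hP, eval_fin_two_eq_sum]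
  subst hf
  rw [triangleIntegral_sum_monomial P.support _ (fun m => (m 0, m 1)), triangleCubature_sum]
  refine Finset.sum_congr rfl fun m hm => ?_
  have hm3 : m 0 + m 1 ≤ 3 := by
    have := MvPolynomial.le_totalDegree hm
    rw [Finsupp.sum_fintype _ _ (fun _ => rfl), Fin.sum_univ_two] at this
    omega
  rw [triangleIntegral_monomial, triangleCubature_monomial hm3]

namespace IsPolyLE

open MvPolynomial

variable {m n : ℕ} {f g : ℝ → ℝ → ℝ}

theorem mono (hmn : m ≤ n) (hf : IsPolyLE m f) : IsPolyLE n f :=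
  let ⟨P, hP, hfP⟩ := hf
  ⟨P, hP.trans hmn, hfP⟩

theorem const (c : ℝ) : IsPolyLE 0 (fun _ _ => c) :=
  ⟨C c, (totalDegree_C c).le, fun _ _ => (eval_C _).symm⟩

theorem fst : IsPolyLE 1 (fun s _ => s) :=
  ⟨X 0, (totalDegree_X 0).le, fun _ _ => by simp⟩

theorem snd : IsPolyLE 1 (fun _ t => t) :=
  ⟨X 1, (totalDegree_X 1).le, fun _ _ => by simp⟩

theorem add (hf : IsPolyLE n f) (hg : IsPolyLE n g) : IsPolyLE n (fun s t => f s t + g s t) :=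
  let ⟨P, hP, hfP⟩ := hf
  let ⟨Q, hQ, hgQ⟩ := hg
  ⟨P + Q, (totalDegree_add P Q).trans (max_le hP hQ), fun s t => by simp [hfP, hgQ]⟩

theorem mul (hf : IsPolyLE m f) (hg : IsPolyLE n g) :
    IsPolyLE (m + n) (fun s t => f s t * g s t) :=
  let ⟨P, hP, hfP⟩ := hf
  let ⟨Q, hQ, hgQ⟩ := hg
  ⟨P * Q, (totalDegree_mul P Q).trans (add_le_add hP hQ), fun s t => by simp [hfP, hgQ]⟩

theorem neg (hf : IsPolyLE n f) : IsPolyLE n (fun s t => -f s t) :=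
  let ⟨P, hP, hfP⟩ := hf
  ⟨-P, (totalDegree_neg P).le.trans hP, fun s t => by simp [hfP]⟩

theorem const_mul (c : ℝ) (hf : IsPolyLE n f) : IsPolyLE n (fun s t => c * f s t) := by
  simpa using (const c).mul hf

theorem affine (α β γ : ℝ) : IsPolyLE 1 (fun s t => α + s * β + t * γ) :=
  (((const α).mono zero_le_one).add (fst.mul (const β))).add (snd.mul (const γ))

end IsPolyLE

def facePoint (a b c : ℝ × ℝ × ℝ) (s t : ℝ) : ℝ × ℝ × ℝ := a + s • (b - a) + t • (c - a)

section FacePoint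

variable (a b c : ℝ × ℝ × ℝ)

theorem isPolyLE_facePoint_fst : IsPolyLE 1 (fun s t => (facePoint a b c s t).1) :=
  IsPolyLE.affine _ _ _

theorem isPolyLE_facePoint_snd_fst : IsPolyLE 1 (fun s t => (facePoint a b c s t).2.1) :=
  IsPolyLE.affine _ _ _

theorem isPolyLE_facePoint_snd_snd : IsPolyLE 1 (fun s t => (facePoint a b c s t).2.2) :=
  IsPolyLE.affine _ _ _

end FacePoint

section FluxIntegrand

variable (a b c N : ℝ × ℝ × ℝ)

theorem isPolyLE_dot3 {n : ℕ} {G : ℝ → ℝ → ℝ × ℝ × ℝ} (h₁ : IsPolyLE n (fun s t => (G s t).1))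
    (h₂ : IsPolyLE n (fun s t => (G s t).2.1)) (h₃ : IsPolyLE n (fun s t => (G s t).2.2)) :
    IsPolyLE n (fun s t => dot3 (G s t) N) :=
  ((h₁.mul (IsPolyLE.const N.1)).add (h₂.mul (IsPolyLE.const N.2.1))).add
    (h₃.mul (IsPolyLE.const N.2.2))

theorem isPolyLE_dot3_uField3 : IsPolyLE 2 (fun s t => dot3 (uField3 (facePoint a b c s t)) N) :=
  isPolyLE_dot3 N ((isPolyLE_facePoint_fst a b c).mul (isPolyLE_facePoint_snd_snd a b c))
    ((isPolyLE_facePoint_snd_fst a b c).mul (isPolyLE_facePoint_snd_snd a b c)).neg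
    ((IsPolyLE.const 0).mono zero_le_two)

theorem isPolyLE_dot3_pField3 (h : ℝ) :
    IsPolyLE 1 (fun s t => dot3 (pField3 h (facePoint a b c s t)) N) :=
  isPolyLE_dot3 N (((isPolyLE_facePoint_fst a b c).const_mul _).const_mul _)
    (((isPolyLE_facePoint_snd_fst a b c).const_mul _).const_mul _)
    ((((IsPolyLE.const _).mono zero_le_one).add
      ((isPolyLE_facePoint_snd_snd a b c).const_mul _)).const_mul _)

theorem isPolyLE_affine_facePoint (c₀ c₁ c₂ c₃ : ℝ) :
    IsPolyLE 1 (fun s t => c₀ + c₁ * (facePoint a b c s t).1 + c₂ * (facePoint a b c s t).2.1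
      + c₃ * (facePoint a b c s t).2.2) :=
  ((((IsPolyLE.const c₀).mono zero_le_one).add ((isPolyLE_facePoint_fst a b c).const_mul c₁)).add
    ((isPolyLE_facePoint_snd_fst a b c).const_mul c₂)).add
    ((isPolyLE_facePoint_snd_snd a b c).const_mul c₃)

end FluxIntegrand

theorem faceFluxMoment_eq_triangleCubature {a b c N : ℝ × ℝ × ℝ} {m n : ℕ}
    {F : ℝ × ℝ × ℝ → ℝ × ℝ × ℝ} {z : ℝ × ℝ × ℝ → ℝ}
    (hF : IsPolyLE m (fun s t => dot3 (F (facePoint a b c s t)) N))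
    (hz : IsPolyLE n (fun s t => z (facePoint a b c s t))) (hmn : m + n ≤ 3) :
    faceFluxMoment F a b c N z =
      triangleCubature (fun s t => dot3 (F (facePoint a b c s t)) N * z (facePoint a b c s t)) :=
  triangleIntegral_eq_triangleCubature ((hF.mul hz).mono hmn)

theorem pField3_is_BDM1_interpolant_general (h1 h2 h3 : ℝ) :
    (∃ A : Fin 3 → ℝ, ∃ B : Fin 3 → Fin 3 → ℝ, ∀ p : ℝ × ℝ × ℝ,
        pField3 h3 p = (A 0 + B 0 0 * p.1 + B 0 1 * p.2.1 + B 0 2 * p.2.2,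
          A 1 + B 1 0 * p.1 + B 1 1 * p.2.1 + B 1 2 * p.2.2,
          A 2 + B 2 0 * p.1 + B 2 1 * p.2.1 + B 2 2 * p.2.2)) ∧
    (∀ c0 c1 c2 c3 : ℝ,
      -- face {p1,p2,p3}, outward area normal (0, -h₁h₃, 0)
      faceFluxMoment (pField3 h3) (0,0,0) (h1,0,0) (0,0,h3) (0, -(h1*h3), 0)
          (fun p => c0 + c1 * p.1 + c2 * p.2.1 + c3 * p.2.2) =
        faceFluxMoment uField3 (0,0,0) (h1,0,0) (0,0,h3) (0, -(h1*h3), 0)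
          (fun p => c0 + c1 * p.1 + c2 * p.2.1 + c3 * p.2.2)) ∧
    (∀ c0 c1 c2 c3 : ℝ,
      -- face {p1,p2,p4}, outward area normal (0, h₁h₃, -h₁h₂)
      faceFluxMoment (pField3 h3) (0,0,0) (h1,0,0) (0,h2,h3) (0, h1*h3, -(h1*h2))
          (fun p => c0 + c1 * p.1 + c2 * p.2.1 + c3 * p.2.2) =
        faceFluxMoment uField3 (0,0,0) (h1,0,0) (0,h2,h3) (0, h1*h3, -(h1*h2))
          (fun p => c0 + c1 * p.1 + c2 * p.2.1 + c3 * p.2.2)) ∧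
    (∀ c0 c1 c2 c3 : ℝ,
      -- face {p1,p3,p4}, outward area normal (-h₂h₃, 0, 0)
      faceFluxMoment (pField3 h3) (0,0,0) (0,0,h3) (0,h2,h3) (-(h2*h3), 0, 0)
          (fun p => c0 + c1 * p.1 + c2 * p.2.1 + c3 * p.2.2) =
        faceFluxMoment uField3 (0,0,0) (0,0,h3) (0,h2,h3) (-(h2*h3), 0, 0)
          (fun p => c0 + c1 * p.1 + c2 * p.2.1 + c3 * p.2.2)) ∧
    (∀ c0 c1 c2 c3 : ℝ,
      -- face {p2,p3,p4}, outward area normal (h₂h₃, 0, h₁h₂)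
      faceFluxMoment (pField3 h3) (h1,0,0) (0,0,h3) (0,h2,h3) (h2*h3, 0, h1*h2)
          (fun p => c0 + c1 * p.1 + c2 * p.2.1 + c3 * p.2.2) =
        faceFluxMoment uField3 (h1,0,0) (0,0,h3) (0,h2,h3) (h2*h3, 0, h1*h2)
          (fun p => c0 + c1 * p.1 + c2 * p.2.1 + c3 * p.2.2)) := by
  refine ⟨⟨![0, 0, h3 * (-h3 / 10)],
    ![![h3 * (2 / 5), 0, 0], ![0, h3 * (-(3 / 5)), 0], ![0, 0, h3 * (1 / 5)]], fun p => ?_⟩,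
    ?_, ?_, ?_, ?_⟩
  · simp only [pField3, Matrix.cons_val, Prod.mk.injEq]
    exact ⟨by ring, by ring, by ring⟩
  all_goals
    intro c0 c1 c2 c3
    rw [faceFluxMoment_eq_triangleCubature (isPolyLE_dot3_pField3 _ _ _ _ h3)
        (isPolyLE_affine_facePoint _ _ _ c0 c1 c2 c3) (by norm_num),
      faceFluxMoment_eq_triangleCubature (isPolyLE_dot3_uField3 _ _ _ _)
        (isPolyLE_affine_facePoint _ _ _ c0 c1 c2 c3) le_rfl]
    simp only [triangleCubature, facePoint, dot3, pField3, uField3, Prod.mk_add_mk, Prod.mk_sub_mk,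
      Prod.smul_mk, smul_eq_mul]
    ring

/-- On the tetrahedron `T̃` with vertices `p1=(0,0,0)`, `p2=(h₁,0,0)`, `p3=(0,0,h₃)`,
`p4=(0,h₂,h₃)`, the field `p` has affine components and its outward normal flux moments
against all affine functions `z` agree with those of `u = (x₁x₃, -x₂x₃, 0)` on each of the
four faces; i.e. `p` is the BDM₁ interpolant of `u` on `T̃`. -/
theorem pField3_is_BDM1_interpolant (h1 h2 h3 : ℝ) (h1p : 0 < h1) (h2p : 0 < h2)
    (h3p : 0 < h3) :
    (∃ A : Fin 3 → ℝ, ∃ B : Fin 3 → Fin 3 → ℝ, ∀ p : ℝ × ℝ × ℝ,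
        pField3 h3 p = (A 0 + B 0 0 * p.1 + B 0 1 * p.2.1 + B 0 2 * p.2.2,
          A 1 + B 1 0 * p.1 + B 1 1 * p.2.1 + B 1 2 * p.2.2,
          A 2 + B 2 0 * p.1 + B 2 1 * p.2.1 + B 2 2 * p.2.2)) ∧
    (∀ c0 c1 c2 c3 : ℝ,
      -- face {p1,p2,p3}, outward area normal (0, -h₁h₃, 0)
      faceFluxMoment (pField3 h3) (0,0,0) (h1,0,0) (0,0,h3) (0, -(h1*h3), 0)
          (fun p => c0 + c1 * p.1 + c2 * p.2.1 + c3 * p.2.2) =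
        faceFluxMoment uField3 (0,0,0) (h1,0,0) (0,0,h3) (0, -(h1*h3), 0)
          (fun p => c0 + c1 * p.1 + c2 * p.2.1 + c3 * p.2.2)) ∧
    (∀ c0 c1 c2 c3 : ℝ,
      -- face {p1,p2,p4}, outward area normal (0, h₁h₃, -h₁h₂)
      faceFluxMoment (pField3 h3) (0,0,0) (h1,0,0) (0,h2,h3) (0, h1*h3, -(h1*h2))
          (fun p => c0 + c1 * p.1 + c2 * p.2.1 + c3 * p.2.2) =
        faceFluxMoment uField3 (0,0,0) (h1,0,0) (0,h2,h3) (0, h1*h3, -(h1*h2))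
          (fun p => c0 + c1 * p.1 + c2 * p.2.1 + c3 * p.2.2)) ∧
    (∀ c0 c1 c2 c3 : ℝ,
      -- face {p1,p3,p4}, outward area normal (-h₂h₃, 0, 0)
      faceFluxMoment (pField3 h3) (0,0,0) (0,0,h3) (0,h2,h3) (-(h2*h3), 0, 0)
          (fun p => c0 + c1 * p.1 + c2 * p.2.1 + c3 * p.2.2) =
        faceFluxMoment uField3 (0,0,0) (0,0,h3) (0,h2,h3) (-(h2*h3), 0, 0)
          (fun p => c0 + c1 * p.1 + c2 * p.2.1 + c3 * p.2.2)) ∧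
    (∀ c0 c1 c2 c3 : ℝ,
      -- face {p2,p3,p4}, outward area normal (h₂h₃, 0, h₁h₂)
      faceFluxMoment (pField3 h3) (h1,0,0) (0,0,h3) (0,h2,h3) (h2*h3, 0, h1*h2)
          (fun p => c0 + c1 * p.1 + c2 * p.2.1 + c3 * p.2.2) =
        faceFluxMoment uField3 (h1,0,0) (0,0,h3) (0,h2,h3) (h2*h3, 0, h1*h2)
          (fun p => c0 + c1 * p.1 + c2 * p.2.1 + c3 * p.2.2)) :=
  pField3_is_BDM1_interpolant_general h1 h2 h3
end

section
/- There exist no constant C>0 such that for all h1,h2,h3>0, the inequality 21h3² ≤ C·(h1² + h2² + h1h2 + √((h1⁴+h1²h2²)/3) + √((h1²h2²+h2⁴)/3)) holds. Consequently, for the tetrahedron T̃ (which satisfies the maximum angle condition but not the regular vertex property), the anisotropic interpolation estimate ‖u − I₁^{BDM}u‖ ≲ Σ_{|α|=1} h^α ‖D^α u‖ + h_T‖div u‖ fails for u=(x1x3,−x2x3,0) when h3 ≫ h1,h2. -/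
/-! The right-hand side does not depend on `h₃`, while the left-hand side grows quadratically
in `h₃`; fixing `h₁ = h₂ = 1` and letting `h₃ → ∞` breaks any constant `C`. -/

open Filter

lemma exists_pos_lt_mul_sq {a : ℝ} (ha : 0 < a) (b : ℝ) : ∃ x : ℝ, 0 < x ∧ b < a * x ^ 2 :=
  ((eventually_gt_atTop 0).and
    ((tendsto_pow_atTop two_ne_zero).const_mul_atTop ha |>.eventually_gt_atTop b)).exists

/-- There is no constant `C > 0` such that for all `h₁, h₂, h₃ > 0`,
`21h₃² ≤ C (h₁² + h₂² + h₁h₂ + √((h₁⁴+h₁²h₂²)/3) + √((h₁²h₂²+h₂⁴)/3))`.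
Consequently the anisotropic interpolation estimate
`‖u - I₁^BDM u‖ ≲ Σ_{|α|=1} h^α ‖D^α u‖ + h_T ‖div u‖` fails on the tetrahedron `T̃`
(which satisfies the maximum angle condition but not the regular vertex property)
for `u = (x₁x₃, -x₂x₃, 0)` when `h₃ ≫ h₁, h₂`. -/
theorem no_uniform_anisotropic_constant :
    ¬ ∃ C : ℝ, 0 < C ∧ ∀ h1 h2 h3 : ℝ, 0 < h1 → 0 < h2 → 0 < h3 →
      21 * h3 ^ 2 ≤
        C * (h1 ^ 2 + h2 ^ 2 + h1 * h2 +
          Real.sqrt ((h1 ^ 4 + h1 ^ 2 * h2 ^ 2) / 3) +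
          Real.sqrt ((h1 ^ 2 * h2 ^ 2 + h2 ^ 4) / 3)) := by
  rintro ⟨C, -, hC⟩
  obtain ⟨h3, hh3, hlt⟩ := exists_pos_lt_mul_sq (a := 21) (by norm_num)
    (C * ((1 : ℝ) ^ 2 + 1 ^ 2 + 1 * 1 + Real.sqrt ((1 ^ 4 + 1 ^ 2 * 1 ^ 2) / 3) +
      Real.sqrt ((1 ^ 2 * 1 ^ 2 + 1 ^ 4) / 3)))
  exact hlt.not_ge (hC 1 1 h3 one_pos one_pos hh3)
end

section
/- Let T̂ ⊂ ℝ³ be the reference tetrahedron with vertices (0,0,0),(1,0,0),(0,1,0),(0,0,1), and let f ∈ L²(e₁) where e₁ is the face opposite (1,0,0). Define û(x) = (f(x2,x3),0,0). If q ∈ P_k(e₁) satisfies ∫_{e₁} f z = ∫_{e₁} q z for all z ∈ P_k(e₁), then the field p̂(x) = (q(x2,x3),0,0) satisfies all BDM_k interpolation conditions for û: its normal moments against P_k on each of the four faces agree with those of û, and ∫_{T̂} p̂·z = ∫_{T̂} û·z for all z ∈ N_{k-1}(T̂). Hence the BDM_k interpolant of û is (q(x2,x3),0,0). -/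
open MeasureTheory intervalIntegral MvPolynomial

/-- The reference tetrahedron `T̂ = conv{(0,0,0),(1,0,0),(0,1,0),(0,0,1)}`. -/
def refTet : Set (ℝ × ℝ × ℝ) := {p | 0 ≤ p.1 ∧ 0 ≤ p.2.1 ∧ 0 ≤ p.2.2 ∧ p.1 + p.2.1 + p.2.2 ≤ 1}

/-- The face `e₁` of `T̂` (in the plane `x₁ = 0`) in its coordinates `(x₂,x₃)`. -/
def refFace : Set (ℝ × ℝ) := {pr | 0 ≤ pr.1 ∧ 0 ≤ pr.2 ∧ pr.1 + pr.2 ≤ 1}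

/-- Evaluation of a polynomial in three variables at a point of `ℝ × ℝ × ℝ`. -/
noncomputable def ev3 (z : MvPolynomial (Fin 3) ℝ) (p : ℝ × ℝ × ℝ) : ℝ :=
  MvPolynomial.eval ![p.1, p.2.1, p.2.2] z

/-! The first component of `p̂ - û` is the only nonzero one and depends on `(x₂, x₃)` alone.
So its flux through the faces `x₂ = 0` and `x₃ = 0` vanishes, while the faces `x₁ = 0` and
`x₁ + x₂ + x₃ = 1` are graphs `x₁ = ℓ(x₂, x₃)` of affine functions over `e₁`: on them a
moment against `z ∈ P_k` is a moment on `e₁` against `z(ℓ(x₂, x₃), x₂, x₃)`, again of degree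
`≤ k`. In the interior moments only the first component `w ∈ P_{k-1}` of the test field enters,
and by Fubini they are moments on `e₁` against `∫₀^{1-x₂-x₃} w dx₁`, of degree `≤ k`. -/

open Set

namespace MvPolynomial

theorem totalDegree_bind₁_le {σ τ R : Type*} [CommSemiring R] {f : σ → MvPolynomial τ R}
    (hf : ∀ i, (f i).totalDegree ≤ 1) (p : MvPolynomial σ R) : (bind₁ f p).totalDegree ≤ p.totalDegree := by
  classical
  conv_lhs => rw [p.as_sum, map_sum]
  refine (totalDegree_finsetSum _ _).trans (Finset.sup_le fun d hd => ?_)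
  rw [bind₁_monomial]
  calc (C (coeff d p) * ∏ i ∈ d.support, f i ^ d i).totalDegree
      ≤ ∑ i ∈ d.support, d i := by
        refine (totalDegree_mul _ _).trans ?_
        rw [totalDegree_C, zero_add]
        refine (totalDegree_finsetProd _ _).trans (Finset.sum_le_sum fun i _ => ?_)
        exact (totalDegree_pow _ _).trans (by simpa using Nat.mul_le_mul_left (d i) (hf i))
    _ ≤ p.totalDegree := le_totalDegree hd

variable {n : ℕ}

theorem continuous_eval_finCons (p : MvPolynomial (Fin (n + 1)) ℝ) (y : Fin n → ℝ) :
    Continuous fun x : ℝ => eval (Fin.cons x y) p :=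
  (continuous_eval p).comp
    ((continuous_id (X := ℝ)).finCons (A := fun _ => ℝ) continuous_const)

theorem exists_intervalIntegral_eval_monomial_eq {L : MvPolynomial (Fin n) ℝ}
    (hL : L.totalDegree ≤ 1) (d : Fin (n + 1) →₀ ℕ) (a : ℝ) :
    ∃ W : MvPolynomial (Fin n) ℝ, W.totalDegree ≤ (d.sum fun _ e => e) + 1 ∧
      ∀ y, ∫ x in (0 : ℝ)..eval y L, eval (Fin.cons x y) (monomial d a) = eval y W := by
  refine ⟨C (a / (d 0 + 1)) * (L ^ (d 0 + 1) * ∏ i : Fin n, X i ^ d i.succ), ?_, fun y => ?_⟩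
  · have hprod : (∏ i : Fin n, (X i : MvPolynomial (Fin n) ℝ) ^ d i.succ).totalDegree
        ≤ ∑ i : Fin n, d i.succ :=
      (totalDegree_finsetProd _ _).trans (Finset.sum_le_sum fun i _ =>
        (totalDegree_pow _ _).trans (by simp [totalDegree_X]))
    have hpow : (L ^ (d 0 + 1)).totalDegree ≤ d 0 + 1 :=
      (totalDegree_pow _ _).trans (by simpa using Nat.mul_le_mul_left (d 0 + 1) hL)
    have hsum : (d.sum fun _ e => e) = d 0 + ∑ i : Fin n, d i.succ := by
      rw [Finsupp.sum_fintype _ _ (fun _ => rfl), Fin.sum_univ_succ]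
    refine (totalDegree_mul _ _).trans ?_
    rw [totalDegree_C, zero_add, hsum]
    exact (totalDegree_mul _ _).trans (by omega)
  · have hmono : ∀ x, eval (Fin.cons x y) (monomial d a) =
        (a * ∏ i : Fin n, y i ^ d i.succ) * x ^ d 0 := fun x => by
      rw [eval_monomial, Finsupp.prod_fintype _ _ (fun _ => pow_zero _), Fin.prod_univ_succ]
      simp only [Fin.cons_zero, Fin.cons_succ]
      ring
    simp only [hmono, intervalIntegral.integral_const_mul, integral_pow, map_mul, map_pow,
      eval_C, map_prod, eval_X]
    rw [zero_pow (Nat.succ_ne_zero _), sub_zero]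
    field_simp

theorem exists_intervalIntegral_eval_eq {L : MvPolynomial (Fin n) ℝ} (hL : L.totalDegree ≤ 1)
    (w : MvPolynomial (Fin (n + 1)) ℝ) :
    ∃ W : MvPolynomial (Fin n) ℝ, W.totalDegree ≤ w.totalDegree + 1 ∧
      ∀ y, ∫ x in (0 : ℝ)..eval y L, eval (Fin.cons x y) w = eval y W := by
  choose W hWdeg hW using fun d => exists_intervalIntegral_eval_monomial_eq hL d (coeff d w)
  refine ⟨∑ d ∈ w.support, W d, ?_, fun y => ?_⟩
  · exact (totalDegree_finsetSum _ _).trans (Finset.sup_le fun d hd =>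
      (hWdeg d).trans (Nat.add_le_add_right (le_totalDegree hd) 1))
  · conv_lhs => rw [w.as_sum]
    simp only [map_sum]
    rw [intervalIntegral.integral_finsetSum fun d _ =>
      (continuous_eval_finCons _ y).intervalIntegrable _ _]
    exact Finset.sum_congr rfl fun d _ => hW d y

end MvPolynomial

theorem setIntegral_prod_eq_setIntegral_intervalIntegral {α : Type*} [MeasurableSpace α]
    {μ : Measure α} [SFinite μ] {A : Set α} {u : α → ℝ} {S : Set (α × ℝ)}
    (hA : MeasurableSet A) (hS : MeasurableSet S) (hu : ∀ a ∈ A, 0 ≤ u a)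
    (hmem : ∀ a t, (a, t) ∈ S ↔ a ∈ A ∧ t ∈ Icc 0 (u a)) {G : α × ℝ → ℝ}
    (hG : IntegrableOn G S (μ.prod volume)) :
    ∫ p in S, G p ∂μ.prod volume = ∫ a in A, (∫ t in (0 : ℝ)..u a, G (a, t)) ∂μ := by
  have hsection : ∀ a, ∫ t, S.indicator G (a, t) =
      A.indicator (fun a => ∫ t in (0 : ℝ)..u a, G (a, t)) a := by
    intro a
    by_cases ha : a ∈ A
    · have hslice : (fun t => S.indicator G (a, t)) =
          (Icc 0 (u a)).indicator fun t => G (a, t) := by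
        ext t; simp only [Set.indicator, hmem, ha, true_and]
      rw [hslice, MeasureTheory.integral_indicator measurableSet_Icc,
        integral_Icc_eq_integral_Ioc, ← intervalIntegral.integral_of_le (hu a ha),
        indicator_of_mem ha]
    · have hslice : (fun t => S.indicator G (a, t)) = 0 := by
        ext t; simp [Set.indicator, hmem, ha]
      simp [hslice, ha]
  rw [← MeasureTheory.integral_indicator hS,
    integral_prod _ ((integrable_indicator_iff hS).2 hG)]
  simp only [hsection]
  exact MeasureTheory.integral_indicator hA

theorem setIntegral_prod_eq_setIntegral_intervalIntegral_swap {β : Type*} [MeasurableSpace β]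
    {ν : Measure β} [SFinite ν] {B : Set β} {u : β → ℝ} {S : Set (ℝ × β)}
    (hB : MeasurableSet B) (hS : MeasurableSet S) (hu : ∀ b ∈ B, 0 ≤ u b)
    (hmem : ∀ x b, (x, b) ∈ S ↔ b ∈ B ∧ x ∈ Icc 0 (u b)) {G : ℝ × β → ℝ}
    (hG : IntegrableOn G S (volume.prod ν)) :
    ∫ p in S, G p ∂volume.prod ν = ∫ b in B, (∫ x in (0 : ℝ)..u b, G (x, b)) ∂ν := by
  have hswap := Measure.measurePreserving_swap (μ := ν) (ν := (volume : Measure ℝ))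
  have hemb := (MeasurableEquiv.prodComm (α := β) (β := ℝ)).measurableEmbedding
  rw [← hswap.setIntegral_preimage_emb hemb]
  exact setIntegral_prod_eq_setIntegral_intervalIntegral hB (hS.preimage measurable_swap) hu
    (fun b x => hmem x b) ((hswap.integrableOn_comp_preimage hemb).2 hG)

theorem isClosed_refFace : IsClosed refFace := by
  simp only [refFace, ofPred_and]
  refine (isClosed_le ?_ ?_).inter ((isClosed_le ?_ ?_).inter (isClosed_le ?_ ?_)) <;> fun_prop

theorem isClosed_refTet : IsClosed refTet := by
  simp only [refTet, ofPred_and]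
  refine (isClosed_le ?_ ?_).inter ((isClosed_le ?_ ?_).inter
    ((isClosed_le ?_ ?_).inter (isClosed_le ?_ ?_))) <;> fun_prop

theorem mem_refFace_iff (s t : ℝ) :
    (s, t) ∈ refFace ↔ s ∈ Icc 0 1 ∧ t ∈ Icc 0 (1 - s) := by
  simp only [refFace, mem_ofPred_eq, mem_Icc]
  constructor
  · rintro ⟨h1, h2, h3⟩; exact ⟨⟨h1, by linarith⟩, h2, by linarith⟩
  · rintro ⟨⟨h1, _⟩, h2, h3⟩; exact ⟨h1, h2, by linarith⟩

theorem isCompact_refFace : IsCompact refFace := by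
  have hsub : refFace ⊆ Icc (0 : ℝ) 1 ×ˢ Icc (0 : ℝ) 1 := by
    rintro ⟨s, t⟩ hst
    obtain ⟨hs, ht⟩ := (mem_refFace_iff s t).1 hst
    exact ⟨hs, ht.1, by linarith [ht.2, hs.1]⟩
  exact (isCompact_Icc.prod isCompact_Icc).of_isClosed_subset isClosed_refFace hsub

theorem mem_refTet_iff (x : ℝ) (pr : ℝ × ℝ) :
    (x, pr) ∈ refTet ↔ pr ∈ refFace ∧ x ∈ Icc 0 (1 - pr.1 - pr.2) := by
  simp only [refTet, refFace, mem_ofPred_eq, mem_Icc]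
  constructor
  · rintro ⟨h1, h2, h3, h4⟩; exact ⟨⟨h2, h3, by linarith⟩, h1, by linarith⟩
  · rintro ⟨⟨h2, h3, _⟩, h1, h4⟩; exact ⟨h1, h2, h3, by linarith⟩

theorem continuous_eval_pair (P : MvPolynomial (Fin 2) ℝ) :
    Continuous fun pr : ℝ × ℝ => eval ![pr.1, pr.2] P :=
  (continuous_eval P).comp (by fun_prop)

theorem continuous_ev3 (w : MvPolynomial (Fin 3) ℝ) : Continuous (ev3 w) :=
  (continuous_eval w).comp (by fun_prop)

theorem setIntegral_refFace {G : ℝ × ℝ → ℝ} (hG : IntegrableOn G refFace) :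
    ∫ pr in refFace, G pr = ∫ s in (0 : ℝ)..1, ∫ t in (0 : ℝ)..1 - s, G (s, t) := by
  rw [Measure.volume_eq_prod] at hG ⊢
  rw [setIntegral_prod_eq_setIntegral_intervalIntegral measurableSet_Icc
    isClosed_refFace.measurableSet (fun s hs => by linarith [hs.2]) mem_refFace_iff hG,
    intervalIntegral.integral_of_le zero_le_one, integral_Icc_eq_integral_Ioc]

theorem integrableOn_refTet_comp_snd_mul {φ : ℝ × ℝ → ℝ} (hφ : IntegrableOn φ refFace)
    {h : ℝ × ℝ × ℝ → ℝ} (hh : Continuous h) :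
    IntegrableOn (fun p => φ p.2 * h p) refTet := by
  have hK : IsCompact (Icc (0 : ℝ) 1 ×ˢ refFace) := isCompact_Icc.prod isCompact_refFace
  have hφK : IntegrableOn (fun p : ℝ × ℝ × ℝ => φ p.2) (Icc 0 1 ×ˢ refFace) := by
    rw [IntegrableOn, Measure.volume_eq_prod, ← Measure.prod_restrict]
    exact hφ.comp_snd _
  refine (hφK.mul_continuousOn hh.continuousOn hK).mono_set fun p hp => ?_
  obtain ⟨hpr, hx⟩ := (mem_refTet_iff p.1 p.2).1 hp
  exact ⟨⟨hx.1, by linarith [hx.2, hpr.1, hpr.2.1]⟩, hpr⟩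

theorem faceFluxMoment_eq_zero_of_fst_eq_zero (φ : ℝ × ℝ × ℝ → ℝ)
    (a b c : ℝ × ℝ × ℝ) {N : ℝ × ℝ × ℝ} (hN : N.1 = 0) (z : ℝ × ℝ × ℝ → ℝ) :
    faceFluxMoment (fun p => (φ p, 0, 0)) a b c N z = 0 := by
  simp [faceFluxMoment, dot3, hN]

theorem faceFluxMoment_fst_eq {φ : ℝ × ℝ → ℝ} (hφ : IntegrableOn φ refFace)
    {L : MvPolynomial (Fin 2) ℝ} {a b c : ℝ × ℝ × ℝ}
    (hγ : ∀ s t : ℝ, a + s • (b - a) + t • (c - a) = (eval ![s, t] L, s, t))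
    (N : ℝ × ℝ × ℝ) (z : MvPolynomial (Fin 3) ℝ) :
    faceFluxMoment (fun p => (φ (p.2.1, p.2.2), 0, 0)) a b c N (ev3 z) =
      N.1 * ∫ pr in refFace, φ pr * eval ![pr.1, pr.2] (bind₁ ![L, X 0, X 1] z) := by
  have htrace : ∀ s t : ℝ,
      ev3 z (eval ![s, t] L, s, t) = eval ![s, t] (bind₁ ![L, X 0, X 1] z) := by
    intro s t
    change _ = eval₂Hom (RingHom.id ℝ) ![s, t] (bind₁ _ z)
    rw [eval₂Hom_bind₁]
    exact congrArg (eval · z) (funext fun i => by fin_cases i <;> simp)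
  rw [← MeasureTheory.integral_const_mul, setIntegral_refFace
    ((hφ.mul_continuousOn (continuous_eval_pair _).continuousOn isCompact_refFace).const_mul _)]
  simp only [faceFluxMoment, hγ, htrace, dot3]
  exact intervalIntegral.integral_congr fun s _ =>
    intervalIntegral.integral_congr fun t _ => by ring

theorem setIntegral_refTet_dot_fst {φ : ℝ × ℝ → ℝ} (hφ : IntegrableOn φ refFace)
    {v : ℝ × ℝ × ℝ → ℝ × ℝ × ℝ} {w : MvPolynomial (Fin 3) ℝ}
    (hv : ∀ p, (v p).1 = ev3 w p) {W : MvPolynomial (Fin 2) ℝ}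
    (hW : ∀ y z, ∫ x in (0 : ℝ)..1 - y - z, ev3 w (x, y, z) = eval ![y, z] W) :
    ∫ p in refTet, dot3 (φ (p.2.1, p.2.2), 0, 0) (v p) =
      ∫ pr in refFace, φ pr * eval ![pr.1, pr.2] W := by
  have hdot : ∀ p : ℝ × ℝ × ℝ,
      dot3 (φ (p.2.1, p.2.2), 0, 0) (v p) = φ p.2 * ev3 w p := fun p => by
    simp [dot3, hv]
  have hint := integrableOn_refTet_comp_snd_mul hφ (continuous_ev3 w)
  simp only [hdot]
  rw [Measure.volume_eq_prod ℝ (ℝ × ℝ)] at hint ⊢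
  rw [setIntegral_prod_eq_setIntegral_intervalIntegral_swap isClosed_refFace.measurableSet
    isClosed_refTet.measurableSet (fun pr hpr => by linarith [hpr.2.2]) mem_refTet_iff hint]
  refine setIntegral_congr_fun isClosed_refFace.measurableSet fun pr _ => ?_
  simp only [intervalIntegral.integral_const_mul, hW]

theorem totalDegree_one_sub_X_sub_X_le :
    (1 - X 0 - X 1 : MvPolynomial (Fin 2) ℝ).totalDegree ≤ 1 :=
  (totalDegree_sub _ _).trans (max_le ((totalDegree_sub _ _).trans
    (max_le (by simp) (by simp [totalDegree_X]))) (by simp [totalDegree_X]))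

theorem faceFluxMoment_fst_eq_of_moments {φ ψ : ℝ × ℝ → ℝ}
    (hφ : IntegrableOn φ refFace) (hψ : IntegrableOn ψ refFace) {k : ℕ}
    (hmom : ∀ z : MvPolynomial (Fin 2) ℝ, z.totalDegree ≤ k →
      ∫ pr in refFace, φ pr * eval ![pr.1, pr.2] z =
        ∫ pr in refFace, ψ pr * eval ![pr.1, pr.2] z)
    {L : MvPolynomial (Fin 2) ℝ} (hL : L.totalDegree ≤ 1) {a b c : ℝ × ℝ × ℝ}
    (hγ : ∀ s t : ℝ, a + s • (b - a) + t • (c - a) = (eval ![s, t] L, s, t))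
    (N : ℝ × ℝ × ℝ) {z : MvPolynomial (Fin 3) ℝ} (hz : z.totalDegree ≤ k) :
    faceFluxMoment (fun p => (ψ (p.2.1, p.2.2), 0, 0)) a b c N (ev3 z) =
      faceFluxMoment (fun p => (φ (p.2.1, p.2.2), 0, 0)) a b c N (ev3 z) := by
  have hsubst : ∀ i, (![L, X 0, X 1] i).totalDegree ≤ 1 := by
    intro i; fin_cases i <;> simp [hL, totalDegree_X]
  rw [faceFluxMoment_fst_eq hφ hγ, faceFluxMoment_fst_eq hψ hγ,
    hmom _ ((totalDegree_bind₁_le hsubst z).trans hz)]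

theorem setIntegral_refTet_dot_fst_of_moments {φ ψ : ℝ × ℝ → ℝ}
    (hφ : IntegrableOn φ refFace) (hψ : IntegrableOn ψ refFace) {k : ℕ}
    (hmom : ∀ z : MvPolynomial (Fin 2) ℝ, z.totalDegree ≤ k →
      ∫ pr in refFace, φ pr * eval ![pr.1, pr.2] z =
        ∫ pr in refFace, ψ pr * eval ![pr.1, pr.2] z)
    {v : ℝ × ℝ × ℝ → ℝ × ℝ × ℝ}
    {w : MvPolynomial (Fin 3) ℝ} (hw : w.totalDegree + 1 ≤ k) (hv : ∀ p, (v p).1 = ev3 w p) :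
    ∫ p in refTet, dot3 (ψ (p.2.1, p.2.2), 0, 0) (v p) =
      ∫ p in refTet, dot3 (φ (p.2.1, p.2.2), 0, 0) (v p) := by
  obtain ⟨W, hWdeg, hW⟩ := exists_intervalIntegral_eval_eq totalDegree_one_sub_X_sub_X_le w
  have hW' : ∀ y z, ∫ x in (0 : ℝ)..1 - y - z, ev3 w (x, y, z) = eval ![y, z] W :=
    fun y z => by simpa [ev3] using hW ![y, z]
  rw [setIntegral_refTet_dot_fst hφ hv hW', setIntegral_refTet_dot_fst hψ hv hW',
    hmom W (hWdeg.trans hw)]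

theorem bdm_zero_refTet_general (k : ℕ) (hk : 1 ≤ k) (f : ℝ × ℝ → ℝ)
    (hf1 : IntegrableOn f refFace volume)
    (q : MvPolynomial (Fin 2) ℝ)
    (hmom : ∀ z : MvPolynomial (Fin 2) ℝ, z.totalDegree ≤ k →
      (∫ pr in refFace, f pr * MvPolynomial.eval ![pr.1, pr.2] z) =
        ∫ pr in refFace, (MvPolynomial.eval ![pr.1, pr.2] q) *
          MvPolynomial.eval ![pr.1, pr.2] z) :
    -- `û` and `p̂`
    ∀ uhat phat : ℝ × ℝ × ℝ → ℝ × ℝ × ℝ,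
    uhat = (fun p => (f (p.2.1, p.2.2), 0, 0)) →
    phat = (fun p => (MvPolynomial.eval ![p.2.1, p.2.2] q, 0, 0)) →
    -- face degrees of freedom agree on all four faces
    ((∀ z : MvPolynomial (Fin 3) ℝ, z.totalDegree ≤ k →
        faceFluxMoment phat (0,0,0) (0,1,0) (0,0,1) (-1,0,0) (ev3 z) =
          faceFluxMoment uhat (0,0,0) (0,1,0) (0,0,1) (-1,0,0) (ev3 z)) ∧
      (∀ z : MvPolynomial (Fin 3) ℝ, z.totalDegree ≤ k →
        faceFluxMoment phat (0,0,0) (1,0,0) (0,0,1) (0,-1,0) (ev3 z) =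
          faceFluxMoment uhat (0,0,0) (1,0,0) (0,0,1) (0,-1,0) (ev3 z)) ∧
      (∀ z : MvPolynomial (Fin 3) ℝ, z.totalDegree ≤ k →
        faceFluxMoment phat (0,0,0) (1,0,0) (0,1,0) (0,0,-1) (ev3 z) =
          faceFluxMoment uhat (0,0,0) (1,0,0) (0,1,0) (0,0,-1) (ev3 z)) ∧
      (∀ z : MvPolynomial (Fin 3) ℝ, z.totalDegree ≤ k →
        faceFluxMoment phat (1,0,0) (0,1,0) (0,0,1) (1,1,1) (ev3 z) =
          faceFluxMoment uhat (1,0,0) (0,1,0) (0,0,1) (1,1,1) (ev3 z))) ∧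
    -- interior degrees of freedom against `N_{k-1} = (P_{k-2})³ ⊕ S_{k-1}` agree
    (∀ A B : Fin 3 → MvPolynomial (Fin 3) ℝ,
      (∀ i, (A i).totalDegree + 2 ≤ k ∨ A i = 0) →
      (∀ i, (B i).totalDegree + 1 ≤ k ∨ B i = 0) →
      B 0 * X 0 + B 1 * X 1 + B 2 * X 2 = 0 →
      (∫ p in refTet, dot3 (phat p)
          (ev3 (A 0 + B 0) p, ev3 (A 1 + B 1) p, ev3 (A 2 + B 2) p)) =
        ∫ p in refTet, dot3 (uhat p)
          (ev3 (A 0 + B 0) p, ev3 (A 1 + B 1) p, ev3 (A 2 + B 2) p)) := by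
  rintro uhat phat rfl rfl
  have hq : IntegrableOn (fun pr : ℝ × ℝ => eval ![pr.1, pr.2] q) refFace :=
    (continuous_eval_pair q).continuousOn.integrableOn_compact isCompact_refFace
  refine ⟨⟨fun z hz => ?_, fun z _ => ?_, fun z _ => ?_, fun z hz => ?_⟩, ?_⟩
  · exact faceFluxMoment_fst_eq_of_moments hf1 hq hmom (L := 0) (by simp)
      (fun s t => by simp) _ hz
  · rw [faceFluxMoment_eq_zero_of_fst_eq_zero _ _ _ _ rfl,
      faceFluxMoment_eq_zero_of_fst_eq_zero _ _ _ _ rfl]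
  · rw [faceFluxMoment_eq_zero_of_fst_eq_zero _ _ _ _ rfl,
      faceFluxMoment_eq_zero_of_fst_eq_zero _ _ _ _ rfl]
  · exact faceFluxMoment_fst_eq_of_moments hf1 hq hmom totalDegree_one_sub_X_sub_X_le
      (fun s t => by ext <;> simp; ring) _ hz
  · intro A B hA hB _
    have hdeg_le : ∀ P : MvPolynomial (Fin 3) ℝ, P.totalDegree + 1 ≤ k ∨ P = 0 →
        P.totalDegree + 1 ≤ k := by
      rintro P (h | rfl)
      exacts [h, by simpa using hk]
    have hA0 := hdeg_le _ ((hA 0).imp (by omega) id)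
    have hB0 := hdeg_le _ (hB 0)
    have hAB := totalDegree_add (A 0) (B 0)
    exact setIntegral_refTet_dot_fst_of_moments hf1 hq hmom (by omega) fun _ => rfl

/-- Lemma 3.2 analogue (`Lemma bdm_zero`): let `f ∈ L²(e₁)`, `û(x) = (f(x₂,x₃),0,0)` and
let `q ∈ P_k(e₁)` satisfy `∫_{e₁} f z = ∫_{e₁} q z` for all `z ∈ P_k(e₁)`.  Then
`p̂(x) = (q(x₂,x₃),0,0)` satisfies *all* BDM_k interpolation conditions for `û` on the
reference tetrahedron `T̂`: the normal flux moments against `P_k` on each of the four faces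
(with outward normals proportional to `(-1,0,0)`, `(0,-1,0)`, `(0,0,-1)`, `(1,1,1)/√3`)
agree, and `∫_{T̂} p̂·z = ∫_{T̂} û·z` for all `z ∈ N_{k-1}(T̂) = (P_{k-2})³ ⊕ S_{k-1}`,
`S_{k-1} = {b ∈ (P_{k-1})³ : b·x ≡ 0}`.  Hence the BDM_k interpolant of `û` is
`(q(x₂,x₃),0,0)`. -/
theorem bdm_zero_refTet (k : ℕ) (hk : 1 ≤ k) (f : ℝ × ℝ → ℝ)
    (hf1 : IntegrableOn f refFace volume)
    (hf2 : IntegrableOn (fun pr => (f pr) ^ 2) refFace volume)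
    (q : MvPolynomial (Fin 2) ℝ) (hq : q.totalDegree ≤ k)
    (hmom : ∀ z : MvPolynomial (Fin 2) ℝ, z.totalDegree ≤ k →
      (∫ pr in refFace, f pr * MvPolynomial.eval ![pr.1, pr.2] z) =
        ∫ pr in refFace, (MvPolynomial.eval ![pr.1, pr.2] q) *
          MvPolynomial.eval ![pr.1, pr.2] z) :
    -- `û` and `p̂`
    ∀ uhat phat : ℝ × ℝ × ℝ → ℝ × ℝ × ℝ,
    uhat = (fun p => (f (p.2.1, p.2.2), 0, 0)) →
    phat = (fun p => (MvPolynomial.eval ![p.2.1, p.2.2] q, 0, 0)) →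
    -- face degrees of freedom agree on all four faces
    ((∀ z : MvPolynomial (Fin 3) ℝ, z.totalDegree ≤ k →
        faceFluxMoment phat (0,0,0) (0,1,0) (0,0,1) (-1,0,0) (ev3 z) =
          faceFluxMoment uhat (0,0,0) (0,1,0) (0,0,1) (-1,0,0) (ev3 z)) ∧
      (∀ z : MvPolynomial (Fin 3) ℝ, z.totalDegree ≤ k →
        faceFluxMoment phat (0,0,0) (1,0,0) (0,0,1) (0,-1,0) (ev3 z) =
          faceFluxMoment uhat (0,0,0) (1,0,0) (0,0,1) (0,-1,0) (ev3 z)) ∧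
      (∀ z : MvPolynomial (Fin 3) ℝ, z.totalDegree ≤ k →
        faceFluxMoment phat (0,0,0) (1,0,0) (0,1,0) (0,0,-1) (ev3 z) =
          faceFluxMoment uhat (0,0,0) (1,0,0) (0,1,0) (0,0,-1) (ev3 z)) ∧
      (∀ z : MvPolynomial (Fin 3) ℝ, z.totalDegree ≤ k →
        faceFluxMoment phat (1,0,0) (0,1,0) (0,0,1) (1,1,1) (ev3 z) =
          faceFluxMoment uhat (1,0,0) (0,1,0) (0,0,1) (1,1,1) (ev3 z))) ∧
    -- interior degrees of freedom against `N_{k-1} = (P_{k-2})³ ⊕ S_{k-1}` agree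
    (∀ A B : Fin 3 → MvPolynomial (Fin 3) ℝ,
      (∀ i, (A i).totalDegree + 2 ≤ k ∨ A i = 0) →
      (∀ i, (B i).totalDegree + 1 ≤ k ∨ B i = 0) →
      B 0 * X 0 + B 1 * X 1 + B 2 * X 2 = 0 →
      (∫ p in refTet, dot3 (phat p)
          (ev3 (A 0 + B 0) p, ev3 (A 1 + B 1) p, ev3 (A 2 + B 2) p)) =
        ∫ p in refTet, dot3 (uhat p)
          (ev3 (A 0 + B 0) p, ev3 (A 1 + B 1) p, ev3 (A 2 + B 2) p)) :=
  bdm_zero_refTet_general k hk f hf1 q hmom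
end

section
/- Let T be a triangle. T satisfies the maximum angle condition with constant φ̄ < π (all interior angles ≤ φ̄) if and only if T satisfies the regular vertex property with a constant c̄ > 0 depending only on φ̄: there is a vertex p such that the two unit vectors l₁,l₂ along the edges emanating from p satisfy |det(l₁ l₂)| ≥ c̄. Conversely, the regular vertex property with constant c̄ implies the maximum angle condition with a bound φ̄(c̄) < π. -/
/-!
By Lagrange's identity in `ℝ²`, `|det N_k|` is the sine of the angle at `p_k`, so both
directions are statements about three angles in `[0, π]` summing to `π`. The largest angle
lies in `[π/3, φ̄]`, where the concave function `sin` is bounded below by its values at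
the endpoints. Conversely, `sin θ ≥ c̄` forces `θ ∈ [arcsin c̄, π - arcsin c̄]`, and then
the other two angles, which sum to `π - θ`, are at most `π - arcsin c̄` as well.
-/

open Real EuclideanGeometry

/-- The determinant of the matrix of unit vectors along the two edges emanating from the
vertex `p` of the triangle `pqr` (its absolute value is `sin` of the angle at `p`). -/
noncomputable def unitEdgeDet (p q r : EuclideanSpace ℝ (Fin 2)) : ℝ :=
  (‖q - p‖⁻¹ • (q - p)) 0 * (‖r - p‖⁻¹ • (r - p)) 1 -
    (‖q - p‖⁻¹ • (q - p)) 1 * (‖r - p‖⁻¹ • (r - p)) 0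

theorem EuclideanSpace.inner_mul_inner_sub_sq_inner_fin_two (x y : EuclideanSpace ℝ (Fin 2)) :
    inner ℝ x x * inner ℝ y y - inner ℝ x y * inner ℝ x y = (x 0 * y 1 - x 1 * y 0) ^ 2 := by
  simp only [PiLp.inner_apply, Fin.sum_univ_two, RCLike.inner_apply, conj_trivial]
  ring

theorem EuclideanSpace.abs_det_fin_two (x y : EuclideanSpace ℝ (Fin 2)) :
    |x 0 * y 1 - x 1 * y 0| = ‖x‖ * ‖y‖ * sin (InnerProductGeometry.angle x y) := by
  rw [mul_comm (‖x‖ * ‖y‖), InnerProductGeometry.sin_angle_mul_norm_mul_norm,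
    inner_mul_inner_sub_sq_inner_fin_two, sqrt_sq_eq_abs]

theorem abs_unitEdgeDet {p q r : EuclideanSpace ℝ (Fin 2)} (hq : q ≠ p) (hr : r ≠ p) :
    |unitEdgeDet p q r| = sin (∠ q p r) := by
  have hq' : ‖q - p‖ ≠ 0 := norm_ne_zero_iff.2 (sub_ne_zero.2 hq)
  have hr' : ‖r - p‖ ≠ 0 := norm_ne_zero_iff.2 (sub_ne_zero.2 hr)
  have hscale : unitEdgeDet p q r =
      (‖q - p‖ * ‖r - p‖)⁻¹ * ((q - p) 0 * (r - p) 1 - (q - p) 1 * (r - p) 0) := by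
    simp only [unitEdgeDet, PiLp.smul_apply, smul_eq_mul]
    ring
  rw [hscale, abs_mul, EuclideanSpace.abs_det_fin_two, abs_inv, abs_of_nonneg (by positivity),
    ← mul_assoc, inv_mul_cancel₀ (mul_ne_zero hq' hr'), one_mul]
  rfl

theorem Real.arcsin_le_of_le_sin {θ s : ℝ} (h₀ : 0 ≤ θ) (hπ : θ ≤ π) (hs : s ≤ sin θ) :
    arcsin s ≤ θ := by
  rcases le_or_gt θ (π / 2) with h | h
  · calc arcsin s ≤ arcsin (sin θ) := monotone_arcsin hs
      _ = θ := arcsin_sin (by linarith [pi_pos]) h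
  · exact (arcsin_le_pi_div_two s).trans h.le

theorem Real.le_pi_sub_arcsin_of_le_sin {θ s : ℝ} (h₀ : 0 ≤ θ) (hπ : θ ≤ π) (hs : s ≤ sin θ) :
    θ ≤ π - arcsin s := by
  have := arcsin_le_of_le_sin (sub_nonneg.2 hπ) (by linarith) ((sin_pi_sub θ).symm ▸ hs)
  linarith

theorem AffineIndependent.ne_of_fin_three {k V P : Type*} [Ring k] [AddCommGroup V] [Module k V]
    [Nontrivial k] [AddTorsor V P] {A B C : P} (h : AffineIndependent k ![A, B, C]) :
    A ≠ B ∧ A ≠ C ∧ B ≠ C :=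
  ⟨by simpa using h.injective.ne (show (0 : Fin 3) ≠ 1 by decide),
    by simpa using h.injective.ne (show (0 : Fin 3) ≠ 2 by decide),
    by simpa using h.injective.ne (show (1 : Fin 3) ≠ 2 by decide)⟩

theorem angle_add_angle_add_angle_eq_pi_of_affineIndependent {V P : Type*}
    [NormedAddCommGroup V] [InnerProductSpace ℝ V] [MetricSpace P] [NormedAddTorsor V P]
    {A B C : P} (h : AffineIndependent ℝ ![A, B, C]) :
    ∠ B A C + ∠ A B C + ∠ A C B = π := by
  rw [← angle_add_angle_add_angle_eq_pi C h.ne_of_fin_three.1.symm, angle_comm B C A,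
    angle_comm C A B]
  ring

theorem abs_unitEdgeDet_eq_sin_angles {A B C : EuclideanSpace ℝ (Fin 2)}
    (h : AffineIndependent ℝ ![A, B, C]) :
    |unitEdgeDet A B C| = sin (∠ B A C) ∧ |unitEdgeDet B A C| = sin (∠ A B C) ∧
      |unitEdgeDet C A B| = sin (∠ A C B) := by
  obtain ⟨hAB, hAC, hBC⟩ := h.ne_of_fin_three
  exact ⟨abs_unitEdgeDet hAB.symm hAC.symm, abs_unitEdgeDet hAB hBC.symm,
    abs_unitEdgeDet hAC hBC⟩

theorem exists_pos_le_sin_of_angles_le {φ : ℝ} (hφ : φ < π) :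
    ∃ c, 0 < c ∧ ∀ α β γ : ℝ, α + β + γ = π → α ≤ φ → β ≤ φ → γ ≤ φ →
      c ≤ sin α ∨ c ≤ sin β ∨ c ≤ sin γ := by
  set m := max φ (π / 3)
  have hm : m < π := max_lt hφ (by linarith [pi_pos])
  have hm₀ : 0 < m := lt_of_lt_of_le (by positivity) (le_max_right φ _)
  refine ⟨min (sin (π / 3)) (sin m), lt_min (sin_pos_of_pos_of_lt_pi (by positivity)
    (by linarith [pi_pos])) (sin_pos_of_pos_of_lt_pi hm₀ hm), fun α β γ hsum hα hβ hγ => ?_⟩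
  have hsin : ∀ θ, π / 3 ≤ θ → θ ≤ φ → min (sin (π / 3)) (sin m) ≤ sin θ := fun θ h₁ h₂ =>
    strictConcaveOn_sin_Icc.concaveOn.min_le_of_mem_Icc ⟨by positivity, by linarith [pi_pos]⟩
      ⟨hm₀.le, hm.le⟩ ⟨h₁, h₂.trans (le_max_left φ _)⟩
  have hlarge : π / 3 ≤ α ∨ π / 3 ≤ β ∨ π / 3 ≤ γ := by
    by_contra! h
    linarith
  exact hlarge.imp (hsin α · hα) (Or.imp (hsin β · hβ) (hsin γ · hγ))

theorem exists_lt_pi_angles_le_of_le_sin {c : ℝ} (hc : 0 < c) :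
    ∃ φ, φ < π ∧ ∀ α β γ : ℝ, 0 ≤ α → 0 ≤ β → 0 ≤ γ → α + β + γ = π →
      (c ≤ sin α ∨ c ≤ sin β ∨ c ≤ sin γ) → α ≤ φ ∧ β ≤ φ ∧ γ ≤ φ := by
  refine ⟨π - arcsin c, sub_lt_self π (arcsin_pos.2 hc), fun α β γ hα hβ hγ hsum h => ?_⟩
  have hbound : ∀ θ, 0 ≤ θ → θ ≤ π → c ≤ sin θ → arcsin c ≤ θ ∧ θ ≤ π - arcsin c :=
    fun θ h₀ hπ hθ => ⟨arcsin_le_of_le_sin h₀ hπ hθ, le_pi_sub_arcsin_of_le_sin h₀ hπ hθ⟩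
  rcases h with h | h | h
  · have := hbound α hα (by linarith) h
    refine ⟨this.2, by linarith, by linarith⟩
  · have := hbound β hβ (by linarith) h
    refine ⟨by linarith, this.2, by linarith⟩
  · have := hbound γ hγ (by linarith) h
    refine ⟨by linarith, by linarith, this.2⟩

/-- For triangles the maximum angle condition and the regular vertex property are
equivalent: (i) for every `φ̄ < π` there is `c̄ > 0` (depending only on `φ̄`) such that any
nondegenerate triangle with all interior angles `≤ φ̄` has a vertex at which the unit edge
vectors satisfy `|det| ≥ c̄`; (ii) conversely, for every `c̄ > 0` there is `φ̄ < π` such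
that any nondegenerate triangle possessing a vertex with `|det| ≥ c̄` has all interior
angles `≤ φ̄`. -/
theorem mac_iff_rvp_triangle :
    (∀ φ : ℝ, φ < π → ∃ c : ℝ, 0 < c ∧
      ∀ A B C : EuclideanSpace ℝ (Fin 2), AffineIndependent ℝ ![A, B, C] →
        EuclideanGeometry.angle B A C ≤ φ → EuclideanGeometry.angle A B C ≤ φ →
        EuclideanGeometry.angle A C B ≤ φ →
        (c ≤ |unitEdgeDet A B C| ∨ c ≤ |unitEdgeDet B A C| ∨ c ≤ |unitEdgeDet C A B|)) ∧
    (∀ c : ℝ, 0 < c → ∃ φ : ℝ, φ < π ∧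
      ∀ A B C : EuclideanSpace ℝ (Fin 2), AffineIndependent ℝ ![A, B, C] →
        (c ≤ |unitEdgeDet A B C| ∨ c ≤ |unitEdgeDet B A C| ∨ c ≤ |unitEdgeDet C A B|) →
        (EuclideanGeometry.angle B A C ≤ φ ∧ EuclideanGeometry.angle A B C ≤ φ ∧
          EuclideanGeometry.angle A C B ≤ φ)) := by
  refine ⟨fun φ hφ => ?_, fun c hc => ?_⟩
  · obtain ⟨c, hc, hsin⟩ := exists_pos_le_sin_of_angles_le hφ
    refine ⟨c, hc, fun A B C hABC hA hB hC => ?_⟩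
    obtain ⟨hdA, hdB, hdC⟩ := abs_unitEdgeDet_eq_sin_angles hABC
    rw [hdA, hdB, hdC]
    exact hsin _ _ _ (angle_add_angle_add_angle_eq_pi_of_affineIndependent hABC) hA hB hC
  · obtain ⟨φ, hφ, hangle⟩ := exists_lt_pi_angles_le_of_le_sin hc
    refine ⟨φ, hφ, fun A B C hABC hdet => ?_⟩
    obtain ⟨hdA, hdB, hdC⟩ := abs_unitEdgeDet_eq_sin_angles hABC
    rw [hdA, hdB, hdC] at hdet
    exact hangle _ _ _ (angle_nonneg B A C) (angle_nonneg A B C) (angle_nonneg A C B)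
      (angle_add_angle_add_angle_eq_pi_of_affineIndependent hABC) hdet
end
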